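/- arXiv:1806.06113 — 3 statements merged into one kernel-verified Lean document; each statement's English description precedes it below -/
import Mathlib

section
/- Let C > 0, T > 0, M₂ > 0, and 0 < ε ≤ 1. Suppose F : [0,T] → [0,∞) is differentiable with F(0) = 0 and F'(t) ≤ (C·M₂^ε/ε)·F(t)^{1-ε/2} + C·F(t) for all t ∈ [0,T]. Then F(t) ≤ e^{2Ct}·M₂²·(Ct/2)^{2/ε} for all t ∈ [0,T]. -/
/-!
With `p = ε / 2` and `δ > 0`, the chain rule and `F ^ (1 - p) ≤ (F + δ) ^ (1 - p)` turn the
sublinear inequality for `F` into the linear inequality `u' ≤ p C u + C M₂ ^ ε / 2` for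
`u = (F + δ) ^ p`, to which the classical Gronwall bound applies. Letting `δ → 0` and using
`F 0 = 0` gives `F t ^ p ≤ (M₂ ^ ε / ε) (e^{pCt} - 1) ≤ M₂ ^ ε (C t / 2) e^{pCt}`; raising this to
the power `1 / p = 2 / ε` gives `F t ≤ e^{Ct} M₂ ^ 2 (C t / 2) ^ (2 / ε)`.
-/

open Real Set Filter Topology

theorem gronwallBound_continuous_δ (K ε x : ℝ) : Continuous fun δ => gronwallBound δ K ε x := by
  by_cases hK : K = 0
  · simp only [gronwallBound_K0, hK]
    fun_prop
  · simp only [gronwallBound_of_K_ne_0 hK]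
    fun_prop

theorem exp_sub_one_le_mul_exp (x : ℝ) : exp x - 1 ≤ x * exp x := by
  have h := mul_le_mul_of_nonneg_left (one_sub_le_exp_neg x) (exp_pos x).le
  rw [← exp_add, add_neg_cancel, exp_zero] at h
  linarith

theorem gronwallBound_zero_le {K ε x : ℝ} (hK : 0 ≤ K) (hε : 0 ≤ ε) :
    gronwallBound 0 K ε x ≤ ε * x * exp (K * x) := by
  rcases hK.eq_or_lt with rfl | hK
  · simp [gronwallBound_K0]
  · simp only [gronwallBound_of_K_ne_0 hK.ne', zero_mul, zero_add]
    calc ε / K * (exp (K * x) - 1) ≤ ε / K * (K * x * exp (K * x)) := by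
          gcongr; exact exp_sub_one_le_mul_exp _
      _ = ε * x * exp (K * x) := by field_simp

theorem le_gronwallBound_of_deriv_right_le {f f' : ℝ → ℝ} {δ K ε a b : ℝ}
    (hf : ContinuousOn f (Icc a b)) (hf' : ∀ x ∈ Ico a b, HasDerivWithinAt f (f' x) (Ici x) x)
    (ha : f a ≤ δ) (bound : ∀ x ∈ Ico a b, f' x ≤ K * f x + ε) :
    ∀ x ∈ Icc a b, f x ≤ gronwallBound δ K ε (x - a) :=
  le_gronwallBound_of_liminf_deriv_right_le hf
    (fun x hx _ hr => ((hf' x hx).liminf_right_slope_le hr).mono fun _ hz => by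
      rwa [slope_def_field, div_eq_inv_mul] at hz) ha bound

theorem mul_rpow_sub_one_mul_le {p A B x y : ℝ} (hp : 0 ≤ p) (hp1 : p ≤ 1) (hA : 0 ≤ A)
    (hB : 0 ≤ B) (hx : 0 ≤ x) (hxy : x ≤ y) (hy : 0 < y) :
    p * y ^ (p - 1) * (A * x ^ (1 - p) + B * x) ≤ p * B * y ^ p + p * A := by
  have h₁ : y ^ (p - 1) * x ^ (1 - p) ≤ 1 := by
    calc y ^ (p - 1) * x ^ (1 - p) ≤ y ^ (p - 1) * y ^ (1 - p) := by
          gcongr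
      _ = 1 := by rw [← rpow_add hy, sub_add_sub_cancel', sub_self, rpow_zero]
  have h₂ : y ^ (p - 1) * x ≤ y ^ p := by
    calc y ^ (p - 1) * x ≤ y ^ (p - 1) * y := by gcongr
      _ = y ^ p := by rw [← rpow_add_one hy.ne', sub_add_cancel]
  calc p * y ^ (p - 1) * (A * x ^ (1 - p) + B * x)
      = p * A * (y ^ (p - 1) * x ^ (1 - p)) + p * B * (y ^ (p - 1) * x) := by ring
    _ ≤ p * A * 1 + p * B * y ^ p := by gcongr
    _ = p * B * y ^ p + p * A := by ring

section Sublinear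

variable {p A B a b : ℝ} {F F' : ℝ → ℝ}

theorem add_rpow_le_gronwallBound_of_deriv_le_sublinear (hp : 0 ≤ p) (hp1 : p ≤ 1) (hA : 0 ≤ A)
    (hB : 0 ≤ B) (hF : ∀ t ∈ Icc a b, 0 ≤ F t) (hF' : ∀ t ∈ Icc a b, HasDerivAt F (F' t) t)
    (hineq : ∀ t ∈ Icc a b, F' t ≤ A * F t ^ (1 - p) + B * F t) {δ : ℝ} (hδ : 0 < δ) :
    ∀ t ∈ Icc a b, (F t + δ) ^ p ≤ gronwallBound ((F a + δ) ^ p) (p * B) (p * A) (t - a) := by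
  have hpos : ∀ t ∈ Icc a b, 0 < F t + δ := fun t ht => by linarith [hF t ht]
  have hderiv : ∀ t ∈ Icc a b,
      HasDerivAt (fun s => (F s + δ) ^ p) (p * (F t + δ) ^ (p - 1) * F' t) t := fun t ht => by
    convert ((hF' t ht).add_const δ).rpow_const (p := p) (Or.inl (hpos t ht).ne') using 1
    ring
  refine le_gronwallBound_of_deriv_right_le
    (fun t ht => (hderiv t ht).continuousAt.continuousWithinAt)
    (fun t ht => (hderiv t (Ico_subset_Icc_self ht)).hasDerivWithinAt) le_rfl fun t ht => ?_
  have ht : t ∈ Icc a b := Ico_subset_Icc_self ht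
  calc p * (F t + δ) ^ (p - 1) * F' t
      ≤ p * (F t + δ) ^ (p - 1) * (A * F t ^ (1 - p) + B * F t) :=
        mul_le_mul_of_nonneg_left (hineq t ht) (mul_nonneg hp (rpow_nonneg (hpos t ht).le _))
    _ ≤ p * B * (F t + δ) ^ p + p * A :=
        mul_rpow_sub_one_mul_le hp hp1 hA hB (hF t ht) (by linarith) (hpos t ht)

theorem rpow_le_gronwallBound_of_deriv_le_sublinear (hp : 0 ≤ p) (hp1 : p ≤ 1) (hA : 0 ≤ A)
    (hB : 0 ≤ B) (hF : ∀ t ∈ Icc a b, 0 ≤ F t) (hF' : ∀ t ∈ Icc a b, HasDerivAt F (F' t) t)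
    (hineq : ∀ t ∈ Icc a b, F' t ≤ A * F t ^ (1 - p) + B * F t) :
    ∀ t ∈ Icc a b, F t ^ p ≤ gronwallBound (F a ^ p) (p * B) (p * A) (t - a) := by
  intro t ht
  have hcont : ∀ s, ContinuousAt (fun δ => (F s + δ) ^ p) 0 := fun s =>
    ((continuous_rpow_const hp).comp (continuous_const.add continuous_id)).continuousAt
  have hlim : Tendsto (fun δ => gronwallBound ((F a + δ) ^ p) (p * B) (p * A) (t - a)) (𝓝 0)
      (𝓝 (gronwallBound (F a ^ p) (p * B) (p * A) (t - a))) := by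
    simpa [Function.comp_def] using
      ((gronwallBound_continuous_δ _ _ _).continuousAt.comp (hcont a)).tendsto
  refine le_of_tendsto_of_tendsto ?_ (hlim.mono_left nhdsWithin_le_nhds)
    (eventually_nhdsWithin_of_forall (s := Ioi 0) fun δ hδ =>
      add_rpow_le_gronwallBound_of_deriv_le_sublinear hp hp1 hA hB hF hF' hineq hδ t ht)
  simpa using ((hcont t).tendsto.mono_left (nhdsWithin_le_nhds (s := Ioi 0)))

end Sublinear

theorem stmt7_general (C T M₂ ε : ℝ) (hC : 0 < C) (hM₂ : 0 < M₂)
    (hε : 0 < ε) (hε1 : ε ≤ 1)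
    (F F' : ℝ → ℝ)
    (hFnonneg : ∀ t ∈ Set.Icc 0 T, 0 ≤ F t)
    (hFderiv : ∀ t ∈ Set.Icc 0 T, HasDerivAt F (F' t) t)
    (hF0 : F 0 = 0)
    (hineq : ∀ t ∈ Set.Icc 0 T,
      F' t ≤ C * M₂ ^ ε / ε * F t ^ (1 - ε / 2 : ℝ) + C * F t) :
    ∀ t ∈ Set.Icc 0 T,
      F t ≤ Real.exp (2 * C * t) * M₂ ^ 2 * (C * t / 2) ^ (2 / ε : ℝ) := by
  intro t ht
  have ht0 : 0 ≤ t := ht.1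
  have hp : 0 < ε / 2 := by positivity
  have hpower : F t ^ (ε / 2) ≤ M₂ ^ ε * (C * t / 2) * exp (ε / 2 * C * t) := by
    have h := rpow_le_gronwallBound_of_deriv_le_sublinear hp.le (by linarith)
      (by positivity) hC.le hFnonneg hFderiv hineq t ht
    rw [hF0, zero_rpow hp.ne', sub_zero] at h
    refine h.trans ((gronwallBound_zero_le (by positivity) (by positivity)).trans_eq ?_)
    field_simp
  calc F t ≤ (M₂ ^ ε * (C * t / 2) * exp (ε / 2 * C * t)) ^ (ε / 2)⁻¹ :=
        (le_rpow_inv_iff_of_pos (hFnonneg t ht) (by positivity) hp).2 hpower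
    _ = exp (C * t) * M₂ ^ 2 * (C * t / 2) ^ (2 / ε) := by
      rw [mul_rpow (by positivity) (by positivity), mul_rpow (by positivity) (by positivity),
        ← rpow_mul hM₂.le, ← exp_mul, inv_div, mul_div_cancel₀ _ hε.ne', rpow_two]
      field_simp
    _ ≤ exp (2 * C * t) * M₂ ^ 2 * (C * t / 2) ^ (2 / ε : ℝ) := by
      gcongr
      linarith

/-- Gronwall-type differential inequality from the Yudovich-style uniqueness proof:
if `F ≥ 0`, `F(0) = 0` and `F' ≤ (C M₂^ε/ε) F^{1-ε/2} + C F`, then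
`F(t) ≤ e^{2Ct} M₂² (Ct/2)^{2/ε}`. -/
theorem stmt7 (C T M₂ ε : ℝ) (hC : 0 < C) (hT : 0 < T) (hM₂ : 0 < M₂)
    (hε : 0 < ε) (hε1 : ε ≤ 1)
    (F F' : ℝ → ℝ)
    (hFnonneg : ∀ t ∈ Set.Icc 0 T, 0 ≤ F t)
    (hFderiv : ∀ t ∈ Set.Icc 0 T, HasDerivAt F (F' t) t)
    (hF0 : F 0 = 0)
    (hineq : ∀ t ∈ Set.Icc 0 T,
      F' t ≤ C * M₂ ^ ε / ε * F t ^ (1 - ε / 2 : ℝ) + C * F t) :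
    ∀ t ∈ Set.Icc 0 T,
      F t ≤ Real.exp (2 * C * t) * M₂ ^ 2 * (C * t / 2) ^ (2 / ε : ℝ) :=
  stmt7_general C T M₂ ε hC hM₂ hε hε1 F F' hFnonneg hFderiv hF0 hineq
end

section
/- Let σ : [0,T] → [0,∞) be continuous, C > 0, M₂ > 0, and suppose for each ε ∈ (0,1], σ(t)² ≤ C·((M₂^ε/ε)·∫₀ᵗ σ(τ)^{2-ε} dτ + ∫₀ᵗ σ(τ)² dτ) for all t ∈ [0,T]. Then σ ≡ 0 on [0,T]. -/
/-!
Yudovich's argument. Suppose `σ` vanishes on `[0, a)` and let `N` bound `σ` and `M₂`. Since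
`σ² ≤ N^ε σ^{2-ε}`, the hypothesis becomes `σ(s)² ≤ K ∫ₐˢ σ^{2-ε}` with `K = 2 C N^ε / ε`, so
`Y = ∫ₐ σ^{2-ε}` satisfies the Bihari inequality `Y' ≤ (K Y)^{1-ε/2}`. Integrating `(Y^{ε/2})'`
produces a factor `ε / 2` that cancels the `1 / ε` in `K`, leaving `σ(t)^ε ≤ C (t - a) N^ε`,
uniformly in `ε`. As `ε → 0` the left side tends to `1` unless `σ(t) = 0`, so `σ` vanishes on
`[a, t]` whenever `C (t - a) < 1`; windows of length `1 / (2C)` exhaust `[0, T]`.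
-/

open Set Filter Topology

theorem rpow_le_of_hasDerivAt_le_mul_rpow {Y Y' : ℝ → ℝ} {a b c q : ℝ} (hab : a ≤ b)
    (hq₀ : 0 < q) (hq₁ : q ≤ 1) (hc : 0 ≤ c) (hY : ContinuousOn Y (Icc a b))
    (hY₀ : ∀ s ∈ Icc a b, 0 ≤ Y s) (hderiv : ∀ s ∈ Ioo a b, HasDerivAt Y (Y' s) s)
    (hbound : ∀ s ∈ Ioo a b, Y' s ≤ c * Y s ^ (1 - q)) :
    Y b ^ q ≤ Y a ^ q + c * q * (b - a) := by
  -- `Y ^ q` need not be differentiable where `Y` vanishes; `(Y + δ) ^ q` is. Let `δ → 0` at the end.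
  have shifted : ∀ δ > 0, Y b ^ q ≤ (Y a + δ) ^ q + c * q * (b - a) := by
    intro δ hδ
    have hpos : ∀ s ∈ Icc a b, 0 < Y s + δ := fun s hs => by linarith [hY₀ s hs]
    have hderiv' : ∀ s ∈ Ioo a b,
        HasDerivAt (fun s => (Y s + δ) ^ q) (Y' s * q * (Y s + δ) ^ (q - 1)) s := fun s hs =>
      ((hderiv s hs).add_const δ).rpow_const (Or.inl (hpos s (Ioo_subset_Icc_self hs)).ne')
    have hslope : ∀ s ∈ interior (Icc a b), deriv (fun s => (Y s + δ) ^ q) s ≤ c * q := by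
      rw [interior_Icc]
      intro s hs
      have hYs := hpos s (Ioo_subset_Icc_self hs)
      have hYs₀ := hY₀ s (Ioo_subset_Icc_self hs)
      rw [(hderiv' s hs).deriv]
      calc Y' s * q * (Y s + δ) ^ (q - 1)
          ≤ c * (Y s + δ) ^ (1 - q) * q * (Y s + δ) ^ (q - 1) := by
            gcongr
            exact (hbound s hs).trans (by gcongr; linarith)
        _ = c * ((Y s + δ) ^ (1 - q) * (Y s + δ) ^ (q - 1)) * q := by ring
        _ = c * q := by rw [← Real.rpow_add hYs]; simp
    have hmvt := (convex_Icc a b).image_sub_le_mul_sub_of_deriv_le (f := fun s => (Y s + δ) ^ q)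
      (fun s hs => ((hY s hs).add continuousWithinAt_const).rpow_const
        (Or.inl (hpos s hs).ne'))
      (fun s hs =>
        (hderiv' s (by rwa [interior_Icc] at hs)).differentiableAt.differentiableWithinAt)
      hslope a (left_mem_Icc.2 hab) b (right_mem_Icc.2 hab) hab
    have hmono : Y b ^ q ≤ (Y b + δ) ^ q :=
      Real.rpow_le_rpow (hY₀ b (right_mem_Icc.2 hab)) (by linarith) hq₀.le
    linarith
  have hlim : Tendsto (fun δ => (Y a + δ) ^ q + c * q * (b - a)) (𝓝[>] 0)
      (𝓝 (Y a ^ q + c * q * (b - a))) := by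
    refine tendsto_nhdsWithin_of_tendsto_nhds ?_
    have := ((continuous_const.add continuous_id).rpow_const
      (fun _ => Or.inr hq₀.le) : Continuous fun δ : ℝ => (Y a + δ) ^ q).tendsto 0
    simpa using this.add_const (c * q * (b - a))
  exact ge_of_tendsto hlim (eventually_nhdsWithin_of_forall shifted)

theorem sq_le_rpow_mul_rpow {x N ε : ℝ} (hx : 0 ≤ x) (hxN : x ≤ N) (hε : 0 ≤ ε) :
    x ^ 2 ≤ N ^ ε * x ^ (2 - ε) := by
  calc x ^ 2 = x ^ ε * x ^ (2 - ε) := by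
        rw [← Real.rpow_add' hx (by norm_num), add_sub_cancel]; norm_cast
    _ ≤ N ^ ε * x ^ (2 - ε) := by gcongr

theorem intervalIntegral.integral_eq_of_eq_zero_on_Ico {f : ℝ → ℝ} {c a s : ℝ} (hca : c ≤ a)
    (hf : ∀ x ∈ Ico c a, f x = 0) (hca_int : IntervalIntegrable f MeasureTheory.volume c a)
    (has_int : IntervalIntegrable f MeasureTheory.volume a s) :
    ∫ x in c..s, f x = ∫ x in a..s, f x := by
  have hzero : ∫ x in c..a, f x = 0 := by
    rw [intervalIntegral.integral_of_le hca, MeasureTheory.integral_Ioc_eq_integral_Ioo]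
    exact MeasureTheory.setIntegral_eq_zero_of_forall_eq_zero
      fun x hx => hf x (Ioo_subset_Ico_self hx)
  rw [← intervalIntegral.integral_add_adjacent_intervals hca_int has_int, hzero, zero_add]

theorem rpow_le_of_sq_le_mul_integral_rpow {σ : ℝ → ℝ} {a b ε K : ℝ} (hab : a ≤ b)
    (hε₀ : 0 < ε) (hε₂ : ε ≤ 2) (hK : 0 ≤ K) (hσ : ContinuousOn σ (Icc a b))
    (hσ₀ : ∀ s ∈ Icc a b, 0 ≤ σ s)
    (h : ∀ s ∈ Icc a b, σ s ^ 2 ≤ K * ∫ τ in a..s, σ τ ^ (2 - ε)) :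
    σ b ^ ε ≤ ε * K * (b - a) / 2 := by
  have sq_rpow : ∀ s ∈ Icc a b, ∀ p : ℝ, (σ s ^ 2) ^ p = σ s ^ (2 * p) := fun s hs p => by
    rw [Real.rpow_mul (hσ₀ s hs)]; norm_cast
  have hf : ContinuousOn (fun τ => σ τ ^ (2 - ε)) (Icc a b) :=
    hσ.rpow_const fun _ _ => Or.inr (by linarith)
  set Y : ℝ → ℝ := fun s => ∫ τ in a..s, σ τ ^ (2 - ε)
  have hY₀ : ∀ s ∈ Icc a b, 0 ≤ Y s := fun s hs =>
    intervalIntegral.integral_nonneg hs.1 fun τ hτ =>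
      Real.rpow_nonneg (hσ₀ τ ⟨hτ.1, hτ.2.trans hs.2⟩) _
  have hY : ContinuousOn Y (Icc a b) := by
    have := intervalIntegral.continuousOn_primitive_interval (μ := MeasureTheory.volume)
      (a := a) (b := b)
      (by rw [uIcc_of_le hab]; exact hf.integrableOn_Icc)
    rwa [uIcc_of_le hab] at this
  have hderiv : ∀ s ∈ Ioo a b, HasDerivAt Y (σ s ^ (2 - ε)) s := fun s hs =>
    intervalIntegral.integral_hasDerivAt_right
      ((hf.mono (Icc_subset_Icc_right hs.2.le)).intervalIntegrable_of_Icc hs.1.le)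
      (hf.mono Ioo_subset_Icc_self |>.stronglyMeasurableAtFilter isOpen_Ioo s hs)
      (hf.continuousAt (Icc_mem_nhds hs.1 hs.2))
  have hbound : ∀ s ∈ Ioo a b, σ s ^ (2 - ε) ≤ K ^ (1 - ε / 2) * Y s ^ (1 - ε / 2) := by
    intro s hs
    have hs' := Ioo_subset_Icc_self hs
    rw [← Real.mul_rpow hK (hY₀ s hs'), show 2 - ε = 2 * (1 - ε / 2) by ring, ← sq_rpow s hs']
    exact Real.rpow_le_rpow (sq_nonneg _) (h s hs') (by linarith)
  have hYb := rpow_le_of_hasDerivAt_le_mul_rpow hab (half_pos hε₀) (by linarith)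
    (Real.rpow_nonneg hK _) hY hY₀ hderiv (by simpa only [sub_sub_cancel] using hbound)
  have hYa : Y a = 0 := intervalIntegral.integral_same
  rw [hYa, Real.zero_rpow (by positivity), zero_add] at hYb
  have hb := right_mem_Icc.2 hab
  calc σ b ^ ε = (σ b ^ 2) ^ (ε / 2) := by rw [sq_rpow b hb]; ring_nf
    _ ≤ (K * Y b) ^ (ε / 2) := Real.rpow_le_rpow (sq_nonneg _) (h b hb) (by positivity)
    _ = K ^ (ε / 2) * Y b ^ (ε / 2) := Real.mul_rpow hK (hY₀ b hb)
    _ ≤ K ^ (ε / 2) * (K ^ (1 - ε / 2) * (ε / 2) * (b - a)) := by gcongr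
    _ = K ^ (ε / 2 + (1 - ε / 2)) * (ε / 2) * (b - a) := by
        rw [Real.rpow_add' hK (by norm_num)]; ring
    _ = ε * K * (b - a) / 2 := by norm_num; ring

theorem one_le_of_forall_rpow_le_mul_rpow {x N c : ℝ} (hx : 0 < x) (hN : 0 < N)
    (h : ∀ ε ∈ Ioc (0 : ℝ) 1, x ^ ε ≤ c * N ^ ε) : 1 ≤ c := by
  have hlim : ∀ y : ℝ, 0 < y → Tendsto (fun ε : ℝ => y ^ ε) (𝓝[>] 0) (𝓝 1) := fun y hy => by
    simpa using ((Real.continuousAt_const_rpow hy.ne').tendsto (x := 0)).mono_left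
      nhdsWithin_le_nhds
  simpa using le_of_tendsto_of_tendsto (hlim x hx) ((hlim N hN).const_mul c)
    (mem_of_superset (Ioc_mem_nhdsGT one_pos) h)

theorem sq_le_mul_integral_rpow_of_yudovich {C M₂ T N a s ε : ℝ} {σ : ℝ → ℝ} (hC : 0 ≤ C)
    (hM₂ : 0 ≤ M₂) (hM₂N : M₂ ≤ N) (hσcont : ContinuousOn σ (Icc 0 T))
    (hσnonneg : ∀ t ∈ Icc 0 T, 0 ≤ σ t) (hσN : ∀ t ∈ Icc 0 T, σ t ≤ N)
    (hε : ε ∈ Ioc (0 : ℝ) 1)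
    (hineq : σ s ^ 2 ≤ C * ((M₂ ^ ε / ε) * (∫ τ in (0 : ℝ)..s, σ τ ^ (2 - ε : ℝ)) +
        ∫ τ in (0 : ℝ)..s, σ τ ^ 2))
    (ha : 0 ≤ a) (has : a ≤ s) (hsT : s ≤ T) (hzero : ∀ τ ∈ Ico 0 a, σ τ = 0) :
    σ s ^ 2 ≤ 2 * C * N ^ ε / ε * ∫ τ in a..s, σ τ ^ (2 - ε) := by
  obtain ⟨hε₀, hε₁⟩ := hε
  have h0 : (0 : ℝ) ∈ Icc 0 T := ⟨le_rfl, ha.trans (has.trans hsT)⟩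
  have ha' : a ∈ Icc 0 T := ⟨ha, has.trans hsT⟩
  have hs' : s ∈ Icc 0 T := ⟨ha.trans has, hsT⟩
  have hintegrable : ∀ {f : ℝ → ℝ}, ContinuousOn f (Icc 0 T) →
      ∀ {p q}, p ∈ Icc 0 T → q ∈ Icc 0 T → IntervalIntegrable f MeasureTheory.volume p q :=
    fun hf _ _ hp hq => (hf.mono (uIcc_subset_Icc hp hq)).intervalIntegrable
  have hrpow_cont : ContinuousOn (fun τ => σ τ ^ (2 - ε)) (Icc 0 T) :=
    hσcont.rpow_const fun _ _ => Or.inr (by linarith)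
  have hsq_cont : ContinuousOn (fun τ => σ τ ^ 2) (Icc 0 T) := hσcont.pow 2
  set I := ∫ τ in a..s, σ τ ^ (2 - ε)
  have hI₀ : 0 ≤ I := intervalIntegral.integral_nonneg has fun τ hτ =>
    Real.rpow_nonneg (hσnonneg τ ⟨ha.trans hτ.1, hτ.2.trans hsT⟩) _
  have hrpow : ∫ τ in (0 : ℝ)..s, σ τ ^ (2 - ε) = I :=
    intervalIntegral.integral_eq_of_eq_zero_on_Ico ha
      (fun τ hτ => by rw [hzero τ hτ, Real.zero_rpow (by linarith)])
      (hintegrable hrpow_cont h0 ha') (hintegrable hrpow_cont ha' hs')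
  have hsq : ∫ τ in (0 : ℝ)..s, σ τ ^ 2 ≤ N ^ ε * I := by
    rw [intervalIntegral.integral_eq_of_eq_zero_on_Ico ha
      (fun τ hτ => by rw [hzero τ hτ, zero_pow two_ne_zero])
      (hintegrable hsq_cont h0 ha') (hintegrable hsq_cont ha' hs'),
      ← intervalIntegral.integral_const_mul]
    exact intervalIntegral.integral_mono_on has (hintegrable hsq_cont ha' hs')
      ((hintegrable hrpow_cont ha' hs').const_mul _) fun τ hτ =>
      sq_le_rpow_mul_rpow (hσnonneg τ ⟨ha.trans hτ.1, hτ.2.trans hsT⟩)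
        (hσN τ ⟨ha.trans hτ.1, hτ.2.trans hsT⟩) hε₀.le
  have hM₂ε : M₂ ^ ε ≤ N ^ ε := Real.rpow_le_rpow hM₂ hM₂N hε₀.le
  have hNε : N ^ ε ≤ N ^ ε / ε := le_div_self (Real.rpow_nonneg (hM₂.trans hM₂N) _) hε₀ hε₁
  calc σ s ^ 2 ≤ C * ((M₂ ^ ε / ε) * I + N ^ ε * I) := by
        rw [hrpow] at hineq; linarith [mul_le_mul_of_nonneg_left hsq hC]
    _ ≤ C * ((N ^ ε / ε) * I + N ^ ε / ε * I) := by gcongr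
    _ = 2 * C * N ^ ε / ε * I := by ring

theorem eq_zero_of_yudovich_of_eq_zero_on_Ico {C M₂ T a t : ℝ} {σ : ℝ → ℝ} (hC : 0 ≤ C)
    (hM₂ : 0 ≤ M₂) (hσcont : ContinuousOn σ (Icc 0 T)) (hσnonneg : ∀ t ∈ Icc 0 T, 0 ≤ σ t)
    (hineq : ∀ ε ∈ Ioc (0 : ℝ) 1, ∀ t ∈ Icc 0 T,
      σ t ^ 2 ≤ C * ((M₂ ^ ε / ε) * (∫ τ in (0 : ℝ)..t, σ τ ^ (2 - ε : ℝ)) +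
        ∫ τ in (0 : ℝ)..t, σ τ ^ 2))
    (ha : 0 ≤ a) (hat : a ≤ t) (htT : t ≤ T) (hshort : C * (t - a) < 1)
    (hzero : ∀ τ ∈ Ico 0 a, σ τ = 0) : σ t = 0 := by
  obtain ⟨R, hR⟩ := isCompact_Icc.exists_bound_of_continuousOn hσcont
  set N := max M₂ R
  have hσN : ∀ s ∈ Icc 0 T, σ s ≤ N := fun s hs =>
    ((le_abs_self _).trans (hR s hs)).trans (le_max_right _ _)
  have hsub : Icc a t ⊆ Icc 0 T := Icc_subset_Icc ha htT
  by_contra hne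
  have ht : t ∈ Icc 0 T := hsub (right_mem_Icc.2 hat)
  have hpos : 0 < σ t := (hσnonneg t ht).lt_of_ne' hne
  have hdecay : ∀ ε ∈ Ioc (0 : ℝ) 1, σ t ^ ε ≤ C * (t - a) * N ^ ε := fun ε hε => by
    have hε₀ : 0 < ε := hε.1
    calc σ t ^ ε ≤ ε * (2 * C * N ^ ε / ε) * (t - a) / 2 :=
          rpow_le_of_sq_le_mul_integral_rpow hat hε₀ (by linarith [hε.2]) (by positivity)
            (hσcont.mono hsub) (fun s hs => hσnonneg s (hsub hs)) fun s hs =>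
              sq_le_mul_integral_rpow_of_yudovich hC hM₂ (le_max_left _ _) hσcont hσnonneg hσN
                hε (hineq ε hε s (hsub hs)) ha hs.1 (hs.2.trans htT) hzero
      _ = C * (t - a) * N ^ ε := by field_simp
  exact (one_le_of_forall_rpow_le_mul_rpow hpos (hpos.trans_le (hσN t ht)) hdecay).not_gt hshort

theorem stmt9_general (C M₂ T : ℝ) (hC : 0 < C) (hM₂ : 0 < M₂)
    (σ : ℝ → ℝ) (hσcont : ContinuousOn σ (Set.Icc 0 T))
    (hσnonneg : ∀ t ∈ Set.Icc 0 T, 0 ≤ σ t)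
    (hineq : ∀ ε ∈ Set.Ioc (0 : ℝ) 1, ∀ t ∈ Set.Icc 0 T,
      σ t ^ 2 ≤ C * ((M₂ ^ ε / ε) * (∫ τ in (0 : ℝ)..t, σ τ ^ (2 - ε : ℝ)) +
        ∫ τ in (0 : ℝ)..t, σ τ ^ 2)) :
    ∀ t ∈ Set.Icc 0 T, σ t = 0 := by
  have hvanish : ∀ n : ℕ, ∀ t ∈ Icc 0 T, t < n / (2 * C) → σ t = 0 := by
    intro n
    induction n with
    | zero =>
      intro t ht hlt
      simp only [Nat.cast_zero, zero_div] at hlt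
      linarith [ht.1]
    | succ n ih =>
      intro t ht hlt
      rcases lt_or_ge t (n / (2 * C)) with hprev | hprev
      · exact ih t ht hprev
      have hshort : C * (t - n / (2 * C)) < 1 := by
        rw [Nat.cast_succ, add_div] at hlt
        have : C * (1 / (2 * C)) = 1 / 2 := by field_simp
        nlinarith
      exact eq_zero_of_yudovich_of_eq_zero_on_Ico hC.le hM₂.le hσcont hσnonneg hineq
        (by positivity) hprev ht.2 hshort fun s hs =>
          ih s ⟨hs.1, hs.2.le.trans (hprev.trans ht.2)⟩ hs.2
  intro t ht
  obtain ⟨n, hn⟩ := exists_nat_gt (2 * C * t)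
  exact hvanish n t ht (by rw [lt_div_iff₀ (by positivity)]; linarith)

/-- Integral-inequality form of the Yudovich uniqueness lemma: if for every
`ε ∈ (0,1]`, `σ(t)² ≤ C((M₂^ε/ε)∫₀ᵗ σ^{2-ε} + ∫₀ᵗ σ²)`, then `σ ≡ 0` on `[0,T]`. -/
theorem stmt9 (C M₂ T : ℝ) (hC : 0 < C) (hM₂ : 0 < M₂) (hT : 0 < T)
    (σ : ℝ → ℝ) (hσcont : ContinuousOn σ (Set.Icc 0 T))
    (hσnonneg : ∀ t ∈ Set.Icc 0 T, 0 ≤ σ t)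
    (hineq : ∀ ε ∈ Set.Ioc (0 : ℝ) 1, ∀ t ∈ Set.Icc 0 T,
      σ t ^ 2 ≤ C * ((M₂ ^ ε / ε) * (∫ τ in (0 : ℝ)..t, σ τ ^ (2 - ε : ℝ)) +
        ∫ τ in (0 : ℝ)..t, σ τ ^ 2)) :
    ∀ t ∈ Set.Icc 0 T, σ t = 0 :=
  stmt9_general C M₂ T hC hM₂ σ hσcont hσnonneg hineq
end

section
/- Let M ⊂ ℝ² be a bounded domain, q : [0,T] → L^p(M) (p > 1) a map such that (i) q(·,τ₂) converges weakly to q(·,τ₁) in L^p(M) as τ₂ → τ₁, and (ii) ‖q(·,τ₂)‖_{L^p} ≤ ‖q(·,τ₁)‖_{L^p} + ∫_{τ₁}^{τ₂} g(t) dt for an integrable function g ≥ 0 and all τ₁ ≤ τ₂. Then q is strongly continuous from the right: q(·,τ₂) → q(·,τ₁) in L^p-norm as τ₂ → τ₁⁺. -/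
/-!
Let `f = q(τ₁)` and pair `q(τ₂)` with `|f|^{p-2} f ∈ L^{p'}`, the norming functional of `f`.
By Young's inequality this pairing bounds `‖·‖_p^p` from below, so the weak convergence gives
`liminf ‖q(τ₂)‖_p ≥ ‖f‖_p`, also for the midpoints `(q(τ₂) + f) / 2`, while the integral bound
on the norms gives `limsup ‖q(τ₂)‖_p ≤ ‖f‖_p` as `τ₂ ↓ τ₁`. Uniform convexity of `|·|^p`, in the
form `|a - b|^p ≤ ε (|a|^p + |b|^p) + C_ε (|a|^p + |b|^p - 2 |(a + b)/2|^p)` (compactness of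
the unit sphere plus homogeneity), then forces `∫ |q(τ₂) - f|^p → 0`: this is the Radon–Riesz
argument.
-/

open MeasureTheory Filter Set
open scoped ENNReal Topology

lemma IsCompact.exists_le_mul {X : Type*} [TopologicalSpace X] {K : Set X} (hK : IsCompact K)
    {F D : X → ℝ} (hF : Continuous F) (hD : Continuous D) (hD0 : ∀ x ∈ K, 0 ≤ D x)
    (hFD : ∀ x ∈ K, 0 ≤ F x → 0 < D x) : ∃ C, 0 ≤ C ∧ ∀ x ∈ K, F x ≤ C * D x := by
  have hK' : IsCompact (K ∩ {x | 0 ≤ F x}) := hK.inter_right (isClosed_le continuous_const hF)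
  obtain ⟨C, hC⟩ := hK'.exists_bound_of_continuousOn
    (hF.continuousOn.div hD.continuousOn fun x hx => (hFD x hx.1 hx.2).ne')
  refine ⟨max C 0, le_max_right _ _, fun x hx => ?_⟩
  rcases le_or_gt 0 (F x) with hFx | hFx
  · have hDx := hFD x hx hFx
    have hquot : F x / D x ≤ max C 0 :=
      ((le_abs_self _).trans (hC x ⟨hx, hFx⟩)).trans (le_max_left _ _)
    rwa [div_le_iff₀ hDx] at hquot
  · exact hFx.le.trans (mul_nonneg (le_max_right _ _) (hD0 x hx))

lemma exists_le_mul_of_homogeneous {E : Type*} [NormedAddCommGroup E] [NormedSpace ℝ E]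
    [ProperSpace E] {F D : E → ℝ} {r : ℝ} (hF : Continuous F) (hD : Continuous D)
    (hFs : ∀ (s : ℝ) x, 0 < s → F (s • x) = s ^ r * F x)
    (hDs : ∀ (s : ℝ) x, 0 < s → D (s • x) = s ^ r * D x)
    (hD0 : ∀ x, 0 ≤ D x) (hFD : ∀ x ≠ 0, 0 ≤ F x → 0 < D x) (hF0 : F 0 ≤ 0) :
    ∃ C, 0 ≤ C ∧ ∀ x, F x ≤ C * D x := by
  obtain ⟨C, hC0, hC⟩ := (isCompact_sphere (0 : E) 1).exists_le_mul hF hD (fun x _ => hD0 x)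
    fun x hx => hFD x (ne_zero_of_mem_sphere one_ne_zero ⟨x, hx⟩)
  refine ⟨C, hC0, fun x => ?_⟩
  rcases eq_or_ne x 0 with rfl | hx
  · exact hF0.trans (mul_nonneg hC0 (hD0 0))
  have ht : 0 < ‖x‖ := norm_pos_iff.2 hx
  set u := ‖x‖⁻¹ • x
  have hu : u ∈ Metric.sphere (0 : E) 1 := by simp [u, norm_smul, ht.ne']
  have hxu : ‖x‖ • u = x := by simp [u, smul_smul, ht.ne']
  calc F x = ‖x‖ ^ r * F u := by rw [← hFs _ _ ht, hxu]
    _ ≤ ‖x‖ ^ r * (C * D u) := mul_le_mul_of_nonneg_left (hC u hu) (by positivity)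
    _ = C * D (‖x‖ • u) := by rw [hDs _ _ ht]; ring
    _ = C * D x := by rw [hxu]

section Scalar

variable {r : ℝ}

lemma abs_midpoint_le (a b : ℝ) : |(a + b) / 2| ≤ 2⁻¹ * |a| + 2⁻¹ * |b| := by
  rw [abs_div, abs_two]; linarith [abs_add_le a b]

lemma two_mul_abs_midpoint_rpow_le (hr : 1 ≤ r) (a b : ℝ) :
    2 * |(a + b) / 2| ^ r ≤ |a| ^ r + |b| ^ r := by
  have hconv := (convexOn_rpow hr).2 (abs_nonneg a) (abs_nonneg b)
    (by norm_num : (0 : ℝ) ≤ 2⁻¹) (by norm_num : (0 : ℝ) ≤ 2⁻¹) (by norm_num)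
  simp only [smul_eq_mul] at hconv
  linarith [Real.rpow_le_rpow (abs_nonneg _) (abs_midpoint_le a b) (zero_le_one.trans hr)]

lemma two_mul_abs_midpoint_rpow_lt (hr : 1 < r) {a b : ℝ} (hab : a ≠ b) :
    2 * |(a + b) / 2| ^ r < |a| ^ r + |b| ^ r := by
  by_cases habs : |a| = |b|
  · obtain rfl : a = -b := (abs_eq_abs.1 habs).resolve_left hab
    have hb : b ≠ 0 := by rintro rfl; simp at hab
    rw [neg_add_cancel, zero_div, abs_zero, Real.zero_rpow (by positivity), abs_neg]
    have := Real.rpow_pos_of_pos (abs_pos.2 hb) r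
    linarith
  · have hconv := (strictConvexOn_rpow hr).2 (abs_nonneg a) (abs_nonneg b) habs
      (by norm_num : (0 : ℝ) < 2⁻¹) (by norm_num : (0 : ℝ) < 2⁻¹) (by norm_num)
    simp only [smul_eq_mul] at hconv
    linarith [Real.rpow_le_rpow (abs_nonneg _) (abs_midpoint_le a b) (zero_le_one.trans hr.le)]

lemma abs_mul_rpow_of_pos {s : ℝ} (hs : 0 < s) (c : ℝ) : |s * c| ^ r = s ^ r * |c| ^ r := by
  rw [abs_mul, abs_of_pos hs, Real.mul_rpow hs.le (abs_nonneg c)]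

lemma exists_abs_sub_rpow_le (hr : 1 < r) {ε : ℝ} (hε : 0 < ε) :
    ∃ C, 0 ≤ C ∧ ∀ a b : ℝ, |a - b| ^ r ≤
      ε * (|a| ^ r + |b| ^ r) + C * (|a| ^ r + |b| ^ r - 2 * |(a + b) / 2| ^ r) := by
  have hr0 : 0 < r := by linarith
  obtain ⟨C, hC0, hC⟩ := exists_le_mul_of_homogeneous (E := ℝ × ℝ) (r := r)
    (F := fun x => |x.1 - x.2| ^ r - ε * (|x.1| ^ r + |x.2| ^ r))
    (D := fun x => |x.1| ^ r + |x.2| ^ r - 2 * |(x.1 + x.2) / 2| ^ r)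
    (by fun_prop (disch := exact hr0.le)) (by fun_prop (disch := exact hr0.le))
    (fun s x hs => by
      simp only [Prod.smul_fst, Prod.smul_snd, smul_eq_mul, ← mul_sub, ← mul_add,
        abs_mul_rpow_of_pos hs]
      ring)
    (fun s x hs => by
      simp only [Prod.smul_fst, Prod.smul_snd, smul_eq_mul, ← mul_add, mul_div_assoc,
        abs_mul_rpow_of_pos hs]
      ring)
    (fun x => by linarith [two_mul_abs_midpoint_rpow_le hr.le x.1 x.2])
    (fun x hx hFx => by
      refine sub_pos.2 (two_mul_abs_midpoint_rpow_lt hr fun h12 => hx ?_)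
      have h2 : x.2 = 0 := by
        by_contra h2
        rw [h12, sub_self, abs_zero, Real.zero_rpow hr0.ne'] at hFx
        nlinarith [mul_pos hε (Real.rpow_pos_of_pos (abs_pos.2 h2) r)]
      exact Prod.ext (h12.trans h2) h2)
    (by simp [Real.zero_rpow hr0.ne'])
  exact ⟨C, hC0, fun a b => by linarith [hC (a, b)]⟩

end Scalar

noncomputable def dualityMap (r s : ℝ) : ℝ := |s| ^ (r - 2) * s

section DualityMap

variable {r : ℝ}

lemma measurable_dualityMap (r : ℝ) : Measurable (dualityMap r) := by
  unfold dualityMap; fun_prop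

lemma mul_dualityMap_self (hr : 0 < r) (s : ℝ) : s * dualityMap r s = |s| ^ r := by
  rcases eq_or_ne s 0 with rfl | hs
  · simp [dualityMap, Real.zero_rpow hr.ne']
  have habs : |s| ≠ 0 := abs_ne_zero.2 hs
  calc s * dualityMap r s = |s| ^ (r - 2) * |s| * |s| := by
        rw [dualityMap, mul_assoc, abs_mul_abs_self]; ring
    _ = |s| ^ r := by
        rw [← Real.rpow_add_one habs, ← Real.rpow_add_one habs]; ring_nf

lemma abs_dualityMap (hr : 1 < r) (s : ℝ) : |dualityMap r s| = |s| ^ (r - 1) := by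
  rcases eq_or_ne s 0 with rfl | hs
  · simp [dualityMap, Real.zero_rpow (sub_ne_zero.2 hr.ne')]
  rw [dualityMap, abs_mul, abs_of_nonneg (Real.rpow_nonneg (abs_nonneg s) _),
    ← Real.rpow_add_one (abs_ne_zero.2 hs)]
  ring_nf

lemma abs_dualityMap_rpow {q : ℝ} (hrq : r.HolderConjugate q) (s : ℝ) :
    |dualityMap r s| ^ q = |s| ^ r := by
  rw [abs_dualityMap hrq.lt, ← Real.rpow_mul (abs_nonneg s), hrq.sub_one_mul_conj]

lemma mul_dualityMap_le (hr : 1 < r) (a s : ℝ) :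
    r * (a * dualityMap r s) ≤ |a| ^ r + (r - 1) * |s| ^ r := by
  have hrq := Real.HolderConjugate.conjExponent hr
  have hyoung := Real.young_inequality a (dualityMap r s) hrq
  rw [abs_dualityMap_rpow hrq] at hyoung
  have hr1 : r - 1 ≠ 0 := sub_ne_zero.2 hr.ne'
  calc r * (a * dualityMap r s) ≤ r * (|a| ^ r / r + |s| ^ r / r.conjExponent) := by
        gcongr
    _ = |a| ^ r + (r - 1) * |s| ^ r := by
        rw [Real.conjExponent]; field_simp

end DualityMap

section Lp

variable {α : Type*} [MeasurableSpace α] {μ : Measure α} {p : ℝ≥0∞}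

lemma one_lt_toReal_of_one_lt (hp : 1 < p) (hptop : p ≠ ⊤) : 1 < p.toReal := by
  simpa using (ENNReal.toReal_lt_toReal ENNReal.one_ne_top hptop).2 hp

lemma memLp_dualityMap {f : α → ℝ} (hf : MemLp f p μ) (hp : 1 < p) (hptop : p ≠ ⊤)
    {q : ℝ≥0∞} [p.HolderConjugate q] : MemLp (fun x => dualityMap p.toReal (f x)) q μ := by
  have hqtop : q ≠ ⊤ := ((ENNReal.HolderConjugate.lt_top_iff_one_lt q p).2 hp).ne
  have hpq := ENNReal.HolderConjugate.toReal_of_ne_top hptop hqtop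
  refine (integrable_norm_rpow_iff ((measurable_dualityMap _).comp_aemeasurable
    hf.1.aemeasurable).aestronglyMeasurable (ENNReal.HolderConjugate.ne_zero q p) hqtop).1 ?_
  refine (hf.integrable_norm_rpow (zero_lt_one.trans hp).ne' hptop).congr
    (Eventually.of_forall fun x => ?_)
  simp only [Function.comp_apply, Real.norm_eq_abs, abs_dualityMap_rpow hpq]

lemma integrable_mul_dualityMap (hp : 1 < p) (hptop : p ≠ ⊤) {h f : α → ℝ}
    (hh : MemLp h p μ) (hf : MemLp f p μ) :
    Integrable (fun x => h x * dualityMap p.toReal (f x)) μ :=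
  have := ENNReal.HolderConjugate.conjExponent hp.le
  hh.integrable_mul (memLp_dualityMap hf hp hptop (q := p.conjExponent))

lemma integral_mul_dualityMap_self (hp0 : p ≠ 0) (hptop : p ≠ ⊤) (f : α → ℝ) :
    ∫ x, f x * dualityMap p.toReal (f x) ∂μ = ∫ x, ‖f x‖ ^ p.toReal ∂μ := by
  simp only [mul_dualityMap_self (ENNReal.toReal_pos hp0 hptop), Real.norm_eq_abs]

lemma integral_mul_dualityMap_le (hp : 1 < p) (hptop : p ≠ ⊤) {h f : α → ℝ}
    (hh : MemLp h p μ) (hf : MemLp f p μ) :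
    p.toReal * ∫ x, h x * dualityMap p.toReal (f x) ∂μ ≤
      ∫ x, ‖h x‖ ^ p.toReal ∂μ + (p.toReal - 1) * ∫ x, ‖f x‖ ^ p.toReal ∂μ := by
  have hp0 : p ≠ 0 := (zero_lt_one.trans hp).ne'
  have hih := hh.integrable_norm_rpow hp0 hptop
  have hif := (hf.integrable_norm_rpow hp0 hptop).const_mul (p.toReal - 1)
  rw [← integral_const_mul, ← integral_const_mul, ← integral_add hih hif]
  refine integral_mono ((integrable_mul_dualityMap hp hptop hh hf).const_mul _) (hih.add hif)
    fun x => ?_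
  simpa only [Real.norm_eq_abs] using
    mul_dualityMap_le (one_lt_toReal_of_one_lt hp hptop) (h x) (f x)

lemma memLp_midpoint {g f : α → ℝ} (hg : MemLp g p μ) (hf : MemLp f p μ) :
    MemLp (fun x => (g x + f x) / 2) p μ := by
  simpa only [Pi.add_apply, div_eq_inv_mul] using (hg.add hf).const_mul 2⁻¹

lemma integral_norm_sub_rpow_le (hp0 : p ≠ 0) (hptop : p ≠ ⊤) {ε C : ℝ}
    (hC : ∀ a b : ℝ, |a - b| ^ p.toReal ≤ ε * (|a| ^ p.toReal + |b| ^ p.toReal) +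
      C * (|a| ^ p.toReal + |b| ^ p.toReal - 2 * |(a + b) / 2| ^ p.toReal))
    {g f : α → ℝ} (hg : MemLp g p μ) (hf : MemLp f p μ) :
    ∫ x, ‖g x - f x‖ ^ p.toReal ∂μ ≤
      ε * (∫ x, ‖g x‖ ^ p.toReal ∂μ + ∫ x, ‖f x‖ ^ p.toReal ∂μ) +
      C * (∫ x, ‖g x‖ ^ p.toReal ∂μ + ∫ x, ‖f x‖ ^ p.toReal ∂μ -
        2 * ∫ x, ‖(g x + f x) / 2‖ ^ p.toReal ∂μ) := by
  set r := p.toReal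
  have hg_int := hg.integrable_norm_rpow hp0 hptop
  have hf_int := hf.integrable_norm_rpow hp0 hptop
  have hm_int := ((memLp_midpoint hg hf).integrable_norm_rpow hp0 hptop).const_mul 2
  have hsum_int : Integrable (fun x => ‖g x‖ ^ r + ‖f x‖ ^ r) μ := hg_int.add hf_int
  have hgap_int : Integrable (fun x => ‖g x‖ ^ r + ‖f x‖ ^ r - 2 * ‖(g x + f x) / 2‖ ^ r) μ :=
    hsum_int.sub hm_int
  have hbound_int : Integrable (fun x => ε * (‖g x‖ ^ r + ‖f x‖ ^ r) +
      C * (‖g x‖ ^ r + ‖f x‖ ^ r - 2 * ‖(g x + f x) / 2‖ ^ r)) μ :=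
    (hsum_int.const_mul ε).add (hgap_int.const_mul C)
  calc ∫ x, ‖g x - f x‖ ^ r ∂μ
      ≤ ∫ x, ε * (‖g x‖ ^ r + ‖f x‖ ^ r) +
          C * (‖g x‖ ^ r + ‖f x‖ ^ r - 2 * ‖(g x + f x) / 2‖ ^ r) ∂μ :=
        integral_mono ((hg.sub hf).integrable_norm_rpow hp0 hptop) hbound_int fun x => by
          simpa only [Real.norm_eq_abs] using hC (g x) (f x)
    _ = _ := by
        rw [integral_add (hsum_int.const_mul ε) (hgap_int.const_mul C), integral_const_mul,
          integral_const_mul, integral_sub hsum_int hm_int, integral_add hg_int hf_int,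
          integral_const_mul]

variable {ι : Type*} {l : Filter ι}

lemma tendsto_integral_norm_rpow_of_weak (hp : 1 < p) (hptop : p ≠ ⊤) {u : ι → α → ℝ}
    {f : α → ℝ} (hu : ∀ᶠ i in l, MemLp (u i) p μ) (hf : MemLp f p μ)
    (hweak : Tendsto (fun i => ∫ x, u i x * dualityMap p.toReal (f x) ∂μ) l
      (𝓝 (∫ x, ‖f x‖ ^ p.toReal ∂μ)))
    {b : ι → ℝ} (hb : Tendsto b l (𝓝 (∫ x, ‖f x‖ ^ p.toReal ∂μ)))
    (hub : ∀ᶠ i in l, ∫ x, ‖u i x‖ ^ p.toReal ∂μ ≤ b i) :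
    Tendsto (fun i => ∫ x, ‖u i x‖ ^ p.toReal ∂μ) l (𝓝 (∫ x, ‖f x‖ ^ p.toReal ∂μ)) := by
  set r := p.toReal
  set A := ∫ x, ‖f x‖ ^ r ∂μ
  have hlow := (hweak.const_mul r).sub_const ((r - 1) * A)
  rw [show r * A - (r - 1) * A = A by ring] at hlow
  refine tendsto_of_tendsto_of_tendsto_of_le_of_le' hlow hb ?_ hub
  filter_upwards [hu] with i hui
  linarith [integral_mul_dualityMap_le hp hptop hui hf]

lemma tendsto_integral_norm_sub_rpow_of_weak (hp : 1 < p) (hptop : p ≠ ⊤) {u : ι → α → ℝ}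
    {f : α → ℝ} (hu : ∀ᶠ i in l, MemLp (u i) p μ) (hf : MemLp f p μ)
    (hweak : Tendsto (fun i => ∫ x, u i x * dualityMap p.toReal (f x) ∂μ) l
      (𝓝 (∫ x, ‖f x‖ ^ p.toReal ∂μ)))
    (hnorm : Tendsto (fun i => ∫ x, ‖u i x‖ ^ p.toReal ∂μ) l (𝓝 (∫ x, ‖f x‖ ^ p.toReal ∂μ))) :
    Tendsto (fun i => ∫ x, ‖u i x - f x‖ ^ p.toReal ∂μ) l (𝓝 0) := by
  have hp0 : p ≠ 0 := (zero_lt_one.trans hp).ne'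
  set r := p.toReal
  have hpairf := integral_mul_dualityMap_self hp0 hptop (μ := μ) f
  set A := ∫ x, ‖f x‖ ^ r ∂μ
  have hA : 0 ≤ A := integral_nonneg fun x => by positivity
  set L : ι → ℝ := fun i => r * ((∫ x, u i x * dualityMap r (f x) ∂μ + A) / 2) - (r - 1) * A
  have hL : Tendsto L l (𝓝 A) := by
    have := (((hweak.add_const A).div_const 2).const_mul r).sub_const ((r - 1) * A)
    rwa [show r * ((A + A) / 2) - (r - 1) * A = A by ring] at this
  -- Young's inequality against `dualityMap r ∘ f` bounds the midpoint norms from below.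
  have hLB : ∀ᶠ i in l, L i ≤ ∫ x, ‖(u i x + f x) / 2‖ ^ r ∂μ := by
    filter_upwards [hu] with i hui
    have hpair : ∫ x, (u i x + f x) / 2 * dualityMap r (f x) ∂μ =
        (∫ x, u i x * dualityMap r (f x) ∂μ + A) / 2 := by
      rw [← hpairf, ← integral_add
        (integrable_mul_dualityMap hp hptop hui hf) (integrable_mul_dualityMap hp hptop hf hf),
        ← integral_div]
      congr 1 with x
      ring
    have := integral_mul_dualityMap_le hp hptop (memLp_midpoint hui hf) hf
    rw [hpair] at this
    simp only [L]
    linarith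
  rw [tendsto_order]
  refine ⟨fun b hb => Eventually.of_forall fun i =>
    hb.trans_le (integral_nonneg fun x => by positivity), fun b hb => ?_⟩
  set ε := b / (2 * (A + 1))
  obtain ⟨C, hC0, hC⟩ := exists_abs_sub_rpow_le (one_lt_toReal_of_one_lt hp hptop)
    (ε := ε) (by positivity)
  have hbound : Tendsto (fun i => ε * (∫ x, ‖u i x‖ ^ r ∂μ + A) +
      C * (∫ x, ‖u i x‖ ^ r ∂μ + A - 2 * L i)) l (𝓝 (ε * (A + A) + C * (A + A - 2 * A))) :=
    ((hnorm.add_const A).const_mul ε).add (((hnorm.add_const A).sub (hL.const_mul 2)).const_mul C)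
  have hlt : ε * (A + A) + C * (A + A - 2 * A) < b := by
    have hεA : ε * (A + A) = b * (A / (A + 1)) := by simp only [ε]; field_simp; ring
    rw [hεA, show A + A - 2 * A = 0 by ring, mul_zero, add_zero]
    exact mul_lt_of_lt_one_right hb ((div_lt_one (by positivity)).2 (by linarith))
  filter_upwards [hbound.eventually_lt_const hlt, hu, hLB] with i hi hui hLi
  calc ∫ x, ‖u i x - f x‖ ^ r ∂μ
      ≤ ε * (∫ x, ‖u i x‖ ^ r ∂μ + A) +
        C * (∫ x, ‖u i x‖ ^ r ∂μ + A - 2 * ∫ x, ‖(u i x + f x) / 2‖ ^ r ∂μ) :=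
        integral_norm_sub_rpow_le hp0 hptop hC hui hf
    _ ≤ ε * (∫ x, ‖u i x‖ ^ r ∂μ + A) + C * (∫ x, ‖u i x‖ ^ r ∂μ + A - 2 * L i) := by
        gcongr
    _ < b := hi

theorem tendsto_eLpNorm_sub_of_weak (hp : 1 < p) (hptop : p ≠ ⊤) {u : ι → α → ℝ}
    {f : α → ℝ} (hu : ∀ᶠ i in l, MemLp (u i) p μ) (hf : MemLp f p μ)
    (hweak : Tendsto (fun i => ∫ x, u i x * dualityMap p.toReal (f x) ∂μ) l
      (𝓝 (∫ x, f x * dualityMap p.toReal (f x) ∂μ)))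
    {b : ι → ℝ} (hb : Tendsto b l (𝓝 (eLpNorm f p μ).toReal))
    (hub : ∀ᶠ i in l, (eLpNorm (u i) p μ).toReal ≤ b i) :
    Tendsto (fun i => (eLpNorm (fun x => u i x - f x) p μ).toReal) l (𝓝 0) := by
  have hp0 : p ≠ 0 := (zero_lt_one.trans hp).ne'
  set r := p.toReal
  have hr : 0 < r := ENNReal.toReal_pos hp0 hptop
  have hnorm_eq (g : α → ℝ) (hg : MemLp g p μ) :
      (eLpNorm g p μ).toReal = (∫ x, ‖g x‖ ^ r ∂μ) ^ r⁻¹ := by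
    rw [toReal_eLpNorm hg.1, lpNorm_eq_integral_norm_rpow_toReal hp0 hptop hg.1]
  have hpow_eq (g : α → ℝ) (hg : MemLp g p μ) :
      ∫ x, ‖g x‖ ^ r ∂μ = (eLpNorm g p μ).toReal ^ r := by
    rw [hnorm_eq g hg, Real.rpow_inv_rpow (integral_nonneg fun x => by positivity) hr.ne']
  rw [integral_mul_dualityMap_self hp0 hptop] at hweak
  have hnorm := tendsto_integral_norm_rpow_of_weak hp hptop hu hf hweak
    (b := fun i => b i ^ r) (by rw [hpow_eq f hf]; exact hb.rpow_const (Or.inr hr.le))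
    (by
      filter_upwards [hu, hub] with i hui hi
      rw [hpow_eq _ hui]
      exact Real.rpow_le_rpow ENNReal.toReal_nonneg hi hr.le)
  have hsub := (tendsto_integral_norm_sub_rpow_of_weak hp hptop hu hf hweak hnorm).rpow_const
    (p := r⁻¹) (Or.inr (by positivity))
  rw [Real.zero_rpow (inv_ne_zero hr.ne')] at hsub
  refine hsub.congr' ?_
  filter_upwards [hu] with i hui
  exact (hnorm_eq (fun x => u i x - f x) (hui.sub hf)).symm

end Lp

theorem stmt15_general (T : ℝ)
    (μ : Measure (Fin 2 → ℝ))
    (p p' : ℝ≥0∞) (hp : 1 < p) (hptop : p ≠ ⊤) (hpp' : 1 / p + 1 / p' = 1)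
    (q : ℝ → (Fin 2 → ℝ) → ℝ)
    (hqLp : ∀ τ ∈ Set.Icc 0 T, MemLp (q τ) p μ)
    (hweak : ∀ τ₁ ∈ Set.Icc 0 T, ∀ g : (Fin 2 → ℝ) → ℝ, MemLp g p' μ →
      Tendsto (fun τ₂ => ∫ x, q τ₂ x * g x ∂μ)
        (nhdsWithin τ₁ (Set.Icc 0 T)) (nhds (∫ x, q τ₁ x * g x ∂μ)))
    (g : ℝ → ℝ) (hgint : IntegrableOn g (Set.Icc 0 T))
    (hnorm : ∀ τ₁ ∈ Set.Icc 0 T, ∀ τ₂ ∈ Set.Icc 0 T, τ₁ ≤ τ₂ →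
      (eLpNorm (q τ₂) p μ).toReal ≤
        (eLpNorm (q τ₁) p μ).toReal + ∫ t in τ₁..τ₂, g t) :
    ∀ τ₁ ∈ Set.Ico 0 T,
      Tendsto (fun τ₂ => (eLpNorm (fun x => q τ₂ x - q τ₁ x) p μ).toReal)
        (nhdsWithin τ₁ (Set.Ioi τ₁)) (nhds 0) := by
  rintro τ₁ ⟨hτ₁0, hτ₁T⟩
  have : p.HolderConjugate p' := ⟨by simpa only [one_div, inv_one] using hpp'⟩
  have hτ₁ : τ₁ ∈ Icc 0 T := ⟨hτ₁0, hτ₁T.le⟩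
  have hIcc : Icc τ₁ T ∈ 𝓝[>] τ₁ := mem_of_superset (Ioo_mem_nhdsGT hτ₁T) Ioo_subset_Icc_self
  have hev : ∀ᶠ τ₂ in 𝓝[>] τ₁, τ₂ ∈ Icc 0 T ∧ τ₁ ≤ τ₂ :=
    mem_of_superset hIcc fun τ₂ h => ⟨⟨hτ₁0.trans h.1, h.2⟩, h.1⟩
  have hG : Tendsto (fun τ₂ => ∫ t in τ₁..τ₂, g t) (𝓝[>] τ₁) (𝓝 0) := by
    have hgint' : IntegrableOn g (uIcc τ₁ T) := by
      rw [uIcc_of_le hτ₁T.le]; exact hgint.mono_set (Icc_subset_Icc_left hτ₁0)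
    have hcont := intervalIntegral.continuousOn_primitive_interval' hgint'.intervalIntegrable
      left_mem_uIcc τ₁ left_mem_uIcc
    simpa using hcont.tendsto.mono_left (nhdsWithin_le_of_mem (by rwa [uIcc_of_le hτ₁T.le]))
  have hq₁ := hqLp τ₁ hτ₁
  exact tendsto_eLpNorm_sub_of_weak hp hptop (hev.mono fun τ₂ h => hqLp τ₂ h.1) hq₁
    ((hweak τ₁ hτ₁ _ (memLp_dualityMap hq₁ hp hptop)).mono_left
      (nhdsWithin_le_of_mem (mem_of_superset hIcc fun τ₂ h => ⟨hτ₁0.trans h.1, h.2⟩)))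
    (by simpa using tendsto_const_nhds.add hG) (hev.mono fun τ₂ h => hnorm τ₁ hτ₁ τ₂ h.1 h.2)

/-- Radon–Riesz upgrade: if `q : [0,T] → L^p(M)` (`1 < p < ∞`) is weakly continuous in
time and satisfies `‖q(·,τ₂)‖_p ≤ ‖q(·,τ₁)‖_p + ∫_{τ₁}^{τ₂} g` for `τ₁ ≤ τ₂`, then `q`
is strongly right-continuous in `L^p(M)`. -/
theorem stmt15 (T : ℝ) (hT : 0 < T)
    (M : Set (Fin 2 → ℝ)) (hMmeas : MeasurableSet M) (hMbdd : Bornology.IsBounded M)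
    (μ : Measure (Fin 2 → ℝ)) (hμ : μ = MeasureTheory.volume.restrict M)
    (p p' : ℝ≥0∞) (hp : 1 < p) (hptop : p ≠ ⊤) (hpp' : 1 / p + 1 / p' = 1)
    (q : ℝ → (Fin 2 → ℝ) → ℝ)
    (hqLp : ∀ τ ∈ Set.Icc 0 T, MemLp (q τ) p μ)
    (hweak : ∀ τ₁ ∈ Set.Icc 0 T, ∀ g : (Fin 2 → ℝ) → ℝ, MemLp g p' μ →
      Tendsto (fun τ₂ => ∫ x, q τ₂ x * g x ∂μ)
        (nhdsWithin τ₁ (Set.Icc 0 T)) (nhds (∫ x, q τ₁ x * g x ∂μ)))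
    (g : ℝ → ℝ) (hgnonneg : ∀ t, 0 ≤ g t) (hgint : IntegrableOn g (Set.Icc 0 T))
    (hnorm : ∀ τ₁ ∈ Set.Icc 0 T, ∀ τ₂ ∈ Set.Icc 0 T, τ₁ ≤ τ₂ →
      (eLpNorm (q τ₂) p μ).toReal ≤
        (eLpNorm (q τ₁) p μ).toReal + ∫ t in τ₁..τ₂, g t) :
    ∀ τ₁ ∈ Set.Ico 0 T,
      Tendsto (fun τ₂ => (eLpNorm (fun x => q τ₂ x - q τ₁ x) p μ).toReal)
        (nhdsWithin τ₁ (Set.Ioi τ₁)) (nhds 0) :=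
  stmt15_general T μ p p' hp hptop hpp' q hqLp hweak g hgint hnorm
end
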